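/- arXiv:1910.11733 — 3 statements merged into one kernel-verified Lean document; each statement's English description precedes it below -/
import Mathlib

section
/- Let G be a graph which has partial self-isomorphisms and let n be an optimal integer. Then the set {k ∈ (n, 2n] : k is optimal} is nonempty. -/
open Set Filter

namespace SepProfile

variable {V : Type*}

/-- Edge boundary of a vertex set: pairs (a,b) with a ∈ A, b ∉ A, a ~ b. -/
def ebd (G : SimpleGraph V) (A : Set V) : Set (V × V) :=
  {p | G.Adj p.1 p.2 ∧ p.1 ∈ A ∧ p.2 ∉ A}

/-- Isoperimetric ratio |∂A|/|A|. -/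
noncomputable def ratio (G : SimpleGraph V) (A : Set V) : ℝ :=
  ((ebd G A).ncard : ℝ) / (A.ncard : ℝ)

/-- Isoperimetric profile Λ(n). -/
noncomputable def isop (G : SimpleGraph V) (n : ℕ) : ℝ :=
  sInf {x | ∃ A : Set V, A.Finite ∧ A.Nonempty ∧ A.ncard ≤ n ∧ x = ratio G A}

/-- Boundary of A within F (edges of the induced subgraph on F leaving A). -/
def inbd (G : SimpleGraph V) (F A : Set V) : Set (V × V) :=
  {p | G.Adj p.1 p.2 ∧ p.1 ∈ A ∧ p.2 ∈ F \ A}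

/-- Cheeger constant of the subgraph induced on F. -/
noncomputable def cheeger (G : SimpleGraph V) (F : Set V) : ℝ :=
  sInf {x | ∃ A : Set V, A ⊆ F ∧ A.Nonempty ∧ 2 * A.ncard ≤ F.ncard ∧
    x = ((inbd G F A).ncard : ℝ) / (A.ncard : ℝ)}

/-- Separation profile Sep(n) = sup_{|F| ≤ n} |F|·h(F). -/
noncomputable def sep (G : SimpleGraph V) (n : ℕ) : ℝ :=
  sSup {x | ∃ F : Set V, F.Finite ∧ F.ncard ≤ n ∧ x = (F.ncard : ℝ) * cheeger G F}

/-- A finite set is optimal if it realizes the isoperimetric profile. -/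
def Optimal (G : SimpleGraph V) (F : Set V) : Prop :=
  F.Finite ∧ F.Nonempty ∧ ratio G F = isop G F.ncard

/-- An integer is optimal if some optimal set has that cardinality. -/
def OptimalInt (G : SimpleGraph V) (n : ℕ) : Prop :=
  ∃ F : Set V, Optimal G F ∧ F.ncard = n

/-- Ball of radius n around v for the graph metric. -/
def ball (G : SimpleGraph V) (v : V) (n : ℕ) : Set V :=
  {u | G.Reachable v u ∧ G.dist v u ≤ n}

/-- All degrees bounded by D. -/
def DegLE (G : SimpleGraph V) (D : ℕ) : Prop :=
  ∀ v, (G.neighborSet v).ncard ≤ D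

/-- Amenability: the isoperimetric profile tends to 0. -/
def Amenable (G : SimpleGraph V) : Prop :=
  Tendsto (fun n => isop G n) atTop (nhds 0)

/-- F together with its outer vertex neighbourhood. -/
def nbh (G : SimpleGraph V) (F : Set V) : Set V :=
  F ∪ {b | ∃ a ∈ F, G.Adj a b}

/-- Partial self-isomorphisms: every finite F has a disjoint isomorphic copy
(together with its boundary neighbourhood). -/
def HasPSI (G : SimpleGraph V) : Prop :=
  ∀ F : Set V, F.Finite →
    ∃ F' : Set V, F'.Finite ∧ Disjoint F F' ∧
      ∃ e : G.induce (nbh G F) ≃g G.induce (nbh G F'),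
        ∀ x : nbh G F, (x : V) ∈ F ↔ ((e x : V) ∈ F')

/-- δ-geometric decay function p_f^δ(x) = inf {y > 0 : f(y) ≤ δ·f(x)}. -/
noncomputable def gdecay (f : ℝ → ℝ) (δ x : ℝ) : ℝ :=
  sInf {y | 0 < y ∧ f y ≤ δ * f x}

end SepProfile

open SepProfile Real

/-!
Let `F` be optimal with `|F| = n`, and let `A` realise `Λ(2n)`: the infimum is attained since
only finitely many ratios with denominator at most `2n` lie below any bound. If `|A| > n`, then
`A` is optimal. Otherwise `Λ(2n) = |∂A|/|A| ≥ Λ(n) = |∂F|/|F|`, while a disjoint copy `F'` of `F`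
gives `|∂(F ∪ F')| ≤ 2|∂F|`; so `F ∪ F'`, of size `2n`, has ratio at most `Λ(2n)` and is optimal.
-/

theorem csInf_mem_of_finite_inter_Iic {α : Type*} [ConditionallyCompleteLinearOrder α]
    {s : Set α} {x : α} (hx : x ∈ s) (hfin : (s ∩ Set.Iic x).Finite) : sInf s ∈ s := by
  have hne : (s ∩ Set.Iic x).Nonempty := ⟨x, hx, le_rfl⟩
  have hmin := hne.csInf_mem hfin
  have hleast : IsLeast s (sInf (s ∩ Set.Iic x)) := by
    refine ⟨hmin.1, fun y hy => ?_⟩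
    rcases le_total y x with hyx | hxy
    · exact csInf_le hfin.bddBelow ⟨hy, hyx⟩
    · exact hmin.2.trans hxy
  exact hleast.csInf_eq ▸ hmin.1

namespace SepProfile

variable {V : Type*} {G : SimpleGraph V}

def ratios (G : SimpleGraph V) (m : ℕ) : Set ℝ :=
  {x | ∃ A : Set V, A.Finite ∧ A.Nonempty ∧ A.ncard ≤ m ∧ x = ratio G A}

theorem ratio_nonneg (G : SimpleGraph V) (A : Set V) : 0 ≤ ratio G A := by
  unfold ratio; positivity

theorem bddBelow_ratios (G : SimpleGraph V) (m : ℕ) : BddBelow (ratios G m) :=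
  ⟨0, fun _ ⟨A, _, _, _, hx⟩ => hx ▸ ratio_nonneg G A⟩

theorem ratios_mono (G : SimpleGraph V) {m m' : ℕ} (h : m ≤ m') : ratios G m ⊆ ratios G m' :=
  fun _ ⟨A, hA, hAne, hAm, hx⟩ => ⟨A, hA, hAne, hAm.trans h, hx⟩

theorem isop_le_ratio {A : Set V} {m : ℕ} (hA : A.Finite) (hAne : A.Nonempty)
    (hAm : A.ncard ≤ m) : isop G m ≤ ratio G A :=
  csInf_le (bddBelow_ratios G m) ⟨A, hA, hAne, hAm, rfl⟩

theorem isop_antitone {m m' : ℕ} (h : m ≤ m') (hne : (ratios G m).Nonempty) :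
    isop G m' ≤ isop G m :=
  csInf_le_csInf (bddBelow_ratios G m') hne (ratios_mono G h)

theorem ratios_inter_Iic_finite (G : SimpleGraph V) (m : ℕ) (c : ℝ) :
    (ratios G m ∩ Set.Iic c).Finite := by
  refine (((Set.finite_Iic ⌈c * m⌉₊).prod (Set.finite_Iic m)).image
    fun pq : ℕ × ℕ => (pq.1 : ℝ) / pq.2).subset ?_
  rintro _ ⟨⟨A, hA, hAne, hAm, rfl⟩, hle⟩
  refine ⟨((ebd G A).ncard, A.ncard), ⟨?_, hAm⟩, rfl⟩
  have hApos : (0 : ℝ) < A.ncard := by exact_mod_cast (Set.ncard_pos hA).mpr hAne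
  have hc : 0 ≤ c := (ratio_nonneg G A).trans hle
  have hbd : ((ebd G A).ncard : ℝ) ≤ c * m := calc
    ((ebd G A).ncard : ℝ) ≤ c * A.ncard := (div_le_iff₀ hApos).mp hle
    _ ≤ c * m := by gcongr
  exact_mod_cast hbd.trans (Nat.le_ceil _)

theorem exists_ratio_eq_isop {A₀ : Set V} {m : ℕ} (hA₀ : A₀.Finite) (hA₀ne : A₀.Nonempty)
    (hA₀m : A₀.ncard ≤ m) :
    ∃ A : Set V, A.Finite ∧ A.Nonempty ∧ A.ncard ≤ m ∧ ratio G A = isop G m := by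
  have hmem : ratio G A₀ ∈ ratios G m := ⟨A₀, hA₀, hA₀ne, hA₀m, rfl⟩
  obtain ⟨A, hA, hAne, hAm, hx⟩ :=
    csInf_mem_of_finite_inter_Iic hmem (ratios_inter_Iic_finite G m _)
  exact ⟨A, hA, hAne, hAm, hx.symm⟩

theorem optimal_of_ratio_eq_isop {A : Set V} {m : ℕ} (hA : A.Finite) (hAne : A.Nonempty)
    (hAm : A.ncard ≤ m) (hAopt : ratio G A = isop G m) : Optimal G A := by
  refine ⟨hA, hAne, le_antisymm ?_ (isop_le_ratio hA hAne le_rfl)⟩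
  exact hAopt ▸ isop_antitone hAm ⟨_, A, hA, hAne, le_rfl, rfl⟩

theorem ebd_union_subset (F F' : Set V) : ebd G (F ∪ F') ⊆ ebd G F ∪ ebd G F' := by
  rintro ⟨a, b⟩ ⟨hab, ha | ha, hb⟩
  · exact Or.inl ⟨hab, ha, fun h => hb (Or.inl h)⟩
  · exact Or.inr ⟨hab, ha, fun h => hb (Or.inr h)⟩

theorem ebd_union_infinite {F F' : Set V} (hinf : (ebd G F).Infinite) (hF : F.Finite)
    (hF' : F'.Finite) : (ebd G (F ∪ F')).Infinite := by
  refine (hinf.sdiff (hF.prod hF')).mono ?_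
  rintro ⟨a, b⟩ ⟨⟨hab, ha, hb⟩, hab'⟩
  refine ⟨hab, Or.inl ha, ?_⟩
  rintro (h | h)
  exacts [hb h, hab' ⟨ha, h⟩]

theorem ratio_union_le {F F' : Set V} (hF : F.Finite) (hF' : F'.Finite) (hdisj : Disjoint F F')
    (hcard : F'.ncard = F.ncard) (hbd : (ebd G F').encard = (ebd G F).encard) :
    ratio G (F ∪ F') ≤ ratio G F := by
  rcases (ebd G F).finite_or_infinite with hfin | hinf
  · have hfin' : (ebd G F').Finite :=
      Set.finite_of_encard_eq_coe (hbd.trans hfin.cast_ncard_eq.symm)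
    have hbd' : (ebd G F').ncard = (ebd G F).ncard := by simp only [Set.ncard_def, hbd]
    have hUbd : (ebd G (F ∪ F')).ncard ≤ 2 * (ebd G F).ncard := calc
      _ ≤ (ebd G F ∪ ebd G F').ncard :=
        Set.ncard_le_ncard (ebd_union_subset F F') (hfin.union hfin')
      _ ≤ (ebd G F).ncard + (ebd G F').ncard := Set.ncard_union_le _ _
      _ = 2 * (ebd G F).ncard := by rw [hbd']; ring
    have hUcard : (F ∪ F').ncard = 2 * F.ncard := by
      rw [Set.ncard_union_eq hdisj hF hF', hcard]; ring
    calc ratio G (F ∪ F') ≤ (2 * (ebd G F).ncard : ℕ) / ((2 * F.ncard : ℕ) : ℝ) := by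
          unfold ratio; rw [hUcard]; gcongr
      _ = ratio G F := by push_cast; exact mul_div_mul_left _ _ two_ne_zero
  -- `ncard` of an infinite set is `0`, so here `ratio G F = 0` and `∂(F ∪ F')` must be infinite too.
  · rw [ratio, (ebd_union_infinite hinf hF hF').ncard, Nat.cast_zero, zero_div]
    exact ratio_nonneg G F

theorem mem_nbh_of_mem {A : Set V} {a : V} (ha : a ∈ A) : a ∈ nbh G A := Or.inl ha

theorem mem_nbh_of_adj {A : Set V} {a b : V} (ha : a ∈ A) (hab : G.Adj a b) : b ∈ nbh G A :=
  Or.inr ⟨a, ha, hab⟩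

section PartialSelfIso

variable {F F' : Set V} (e : G.induce (nbh G F) ≃g G.induce (nbh G F'))
  (he : ∀ x : nbh G F, (x : V) ∈ F ↔ (e x : V) ∈ F')

include he in
theorem symm_mem_iff (y : nbh G F') : (e.symm y : V) ∈ F ↔ (y : V) ∈ F' := by
  simpa only [e.apply_symm_apply] using he (e.symm y)

noncomputable def copyEquiv : F ≃ F' where
  toFun x := ⟨e ⟨x, mem_nbh_of_mem x.2⟩, (he _).mp x.2⟩
  invFun y := ⟨e.symm ⟨y, mem_nbh_of_mem y.2⟩, (symm_mem_iff e he _).mpr y.2⟩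
  left_inv x := Subtype.ext (by simp)
  right_inv y := Subtype.ext (by simp)

noncomputable def ebdCopyEquiv : ebd G F ≃ ebd G F' where
  toFun p :=
    ⟨(e ⟨p.1.1, mem_nbh_of_mem p.2.2.1⟩, e ⟨p.1.2, mem_nbh_of_adj p.2.2.1 p.2.1⟩),
      e.map_adj_iff.mpr p.2.1, (he _).mp p.2.2.1, fun h => p.2.2.2 ((he _).mpr h)⟩
  invFun q :=
    ⟨(e.symm ⟨q.1.1, mem_nbh_of_mem q.2.2.1⟩, e.symm ⟨q.1.2, mem_nbh_of_adj q.2.2.1 q.2.1⟩),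
      e.symm.map_adj_iff.mpr q.2.1, (symm_mem_iff e he _).mpr q.2.2.1,
      fun h => q.2.2.2 ((symm_mem_iff e he _).mp h)⟩
  left_inv p := Subtype.ext (Prod.ext (by simp) (by simp))
  right_inv q := Subtype.ext (Prod.ext (by simp) (by simp))

end PartialSelfIso

theorem HasPSI.exists_disjoint_copy (hG : HasPSI G) {F : Set V} (hF : F.Finite) :
    ∃ F' : Set V, F'.Finite ∧ Disjoint F F' ∧ F'.ncard = F.ncard ∧
      (ebd G F').encard = (ebd G F).encard := by
  obtain ⟨F', hF', hdisj, e, he⟩ := hG F hF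
  exact ⟨F', hF', hdisj, congrArg ENat.toNat (Set.encard_congr (copyEquiv e he)).symm,
    (Set.encard_congr (ebdCopyEquiv e he)).symm⟩

end SepProfile

theorem stmt2 {V : Type*} (G : SimpleGraph V) (hPSI : HasPSI G) (n : ℕ)
    (hn : OptimalInt G n) :
    ∃ k, n < k ∧ k ≤ 2 * n ∧ OptimalInt G k := by
  obtain ⟨F, ⟨hF, hFne, hFopt⟩, rfl⟩ := hn
  have hFpos : 0 < F.ncard := (Set.ncard_pos hF).mpr hFne
  obtain ⟨F', hF', hdisj, hcard, hbd⟩ := hPSI.exists_disjoint_copy hF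
  obtain ⟨A, hA, hAne, hAcard, hAopt⟩ := exists_ratio_eq_isop (G := G) hF hFne
    (show F.ncard ≤ 2 * F.ncard by omega)
  by_cases hlt : F.ncard < A.ncard
  · exact ⟨A.ncard, hlt, hAcard, A, optimal_of_ratio_eq_isop hA hAne hAcard hAopt, rfl⟩
  have hUfin : (F ∪ F').Finite := hF.union hF'
  have hUne : (F ∪ F').Nonempty := hFne.mono Set.subset_union_left
  have hU : (F ∪ F').ncard = 2 * F.ncard := by
    rw [Set.ncard_union_eq hdisj hF hF', hcard, two_mul]
  refine ⟨2 * F.ncard, by omega, le_rfl, F ∪ F', optimal_of_ratio_eq_isop hUfin hUne hU.le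
    (le_antisymm ?_ (isop_le_ratio hUfin hUne hU.le)), hU⟩
  calc ratio G (F ∪ F') ≤ ratio G F := ratio_union_le hF hF' hdisj hcard hbd
    _ = isop G F.ncard := hFopt
    _ ≤ ratio G A := isop_le_ratio hA hAne (not_lt.mp hlt)
    _ = isop G (2 * F.ncard) := hAopt
end

section
/- Let G be a graph of bounded degree such that for all vertices v and integers n, |B(v,n)| ≤ b·n^{d₂} for constants b, d₂ > 0, and fix η ∈ (0,1). Then there exists A > 0 (depending only on b, d₂, η) such that for every vertex v and every positive integer n there exists an integer m with n^{1−η} ≤ m ≤ n and |B(v,2m)| ≤ A·|B(v,m)|. -/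
/-!
If `|B(v,2m)| > A·|B(v,m)|` held at every scale `m ∈ [n^{1-η}, n]`, then doubling `K ≈ η·log₂ n`
times from `m₀ = ⌈n^{1-η}⌉` would give `|B(v,n)| ≥ A^K ≥ 2^{tK} ≳ (n^η/4)^t`, which exceeds the
polynomial bound `b·n^{d₂}` as soon as `η t ≥ d₂ + 1` and `n > N = ⌈b·4^t⌉`. For `n ≤ N` the
single scale `m = n` works once `A ≥ b·(2N)^{d₂}`.
-/

open Set Filter

open SepProfile Real

lemma pow_mul_le_of_forall_mul_le_two_mul {f : ℕ → ℝ} {A : ℝ} (hA : 0 ≤ A) {m₀ n : ℕ}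
    (h : ∀ m, m₀ ≤ m → 2 * m ≤ n → A * f m ≤ f (2 * m)) :
    ∀ j : ℕ, 2 ^ j * m₀ ≤ n → A ^ j * f m₀ ≤ f (2 ^ j * m₀) := by
  intro j
  induction j with
  | zero => simp
  | succ j ih =>
    intro hj
    have hstep : 2 * (2 ^ j * m₀) ≤ n := by rwa [← mul_assoc, ← pow_succ']
    calc A ^ (j + 1) * f m₀ = A * (A ^ j * f m₀) := by ring
      _ ≤ A * f (2 ^ j * m₀) := by gcongr; exact ih (by omega)
      _ ≤ f (2 * (2 ^ j * m₀)) := h _ (Nat.le_mul_of_pos_left m₀ (by positivity)) hstep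
      _ = f (2 ^ (j + 1) * m₀) := by rw [pow_succ', mul_assoc]

lemma exists_two_pow_mul_ceil_rpow_le {η : ℝ} (hη0 : 0 ≤ η) (hη1 : η ≤ 1) {n : ℕ} (hn : 0 < n) :
    ∃ K : ℕ, 2 ^ K * ⌈(n : ℝ) ^ (1 - η)⌉₊ ≤ n ∧ (n : ℝ) ^ η ≤ 4 * 2 ^ K := by
  set m₀ := ⌈(n : ℝ) ^ (1 - η)⌉₊
  have hn1 : (1 : ℝ) ≤ n := by exact_mod_cast hn
  have hpow1 : 1 ≤ (n : ℝ) ^ (1 - η) := one_le_rpow hn1 (by linarith)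
  have hm₀ : 0 < m₀ := Nat.ceil_pos.2 (by linarith)
  have hm₀n : m₀ ≤ n := Nat.ceil_le.2 (rpow_le_self_of_one_le hn1 (by linarith))
  have hm₀le : (m₀ : ℝ) ≤ 2 * (n : ℝ) ^ (1 - η) := by
    linarith [Nat.ceil_lt_add_one (by linarith : (0 : ℝ) ≤ (n : ℝ) ^ (1 - η))]
  set K := Nat.log 2 (n / m₀)
  have hdiv : n / m₀ ≠ 0 := (Nat.div_pos hm₀n hm₀).ne'
  refine ⟨K, (Nat.le_div_iff_mul_le hm₀).1 (Nat.pow_log_le_self 2 hdiv), ?_⟩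
  have hlt : (n : ℝ) < 2 ^ (K + 1) * m₀ := by
    exact_mod_cast (Nat.div_lt_iff_lt_mul hm₀).1 (Nat.lt_pow_succ_log_self one_lt_two (n / m₀))
  have : (n : ℝ) ^ η * (n : ℝ) ^ (1 - η) < (4 * 2 ^ K) * (n : ℝ) ^ (1 - η) := by
    calc (n : ℝ) ^ η * (n : ℝ) ^ (1 - η) = n := by rw [← rpow_add (by linarith)]; norm_num
      _ < 2 ^ (K + 1) * m₀ := hlt
      _ ≤ 2 ^ (K + 1) * (2 * (n : ℝ) ^ (1 - η)) := by gcongr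
      _ = (4 * 2 ^ K) * (n : ℝ) ^ (1 - η) := by ring
  exact (lt_of_mul_lt_mul_right this (by linarith)).le

lemma mul_rpow_lt_rpow_div_four_pow {b d η x : ℝ} {t : ℕ} (hx : 1 ≤ x) (hbx : b * 4 ^ t < x)
    (ht : d + 1 ≤ η * t) : b * x ^ d < (x ^ η / 4) ^ t := by
  have hx0 : 0 < x := by linarith
  rw [div_pow, ← rpow_natCast (x ^ η), ← rpow_mul hx0.le, lt_div_iff₀ (by positivity)]
  calc b * x ^ d * 4 ^ t = x ^ d * (b * 4 ^ t) := by ring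
    _ < x ^ d * x := by gcongr
    _ = x ^ (d + 1) := by rw [rpow_add hx0, rpow_one]
    _ ≤ x ^ (η * t) := rpow_le_rpow_of_exponent_le hx ht

section DoublingScale

variable {f : ℕ → ℝ} {b d η : ℝ}

lemma exists_doubling_scale_of_mul_four_pow_lt (hmono : Monotone f) (hf1 : ∀ m, 1 ≤ f m)
    (hgrowth : ∀ n : ℕ, 1 ≤ n → f n ≤ b * (n : ℝ) ^ d) (hη0 : 0 < η) (hη1 : η < 1)
    {t : ℕ} (ht : d + 1 ≤ η * t) {A : ℝ} (hA : 2 ^ t ≤ A) {n : ℕ} (hn : 0 < n)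
    (hbn : b * 4 ^ t < n) :
    ∃ m : ℕ, (n : ℝ) ^ (1 - η) ≤ m ∧ m ≤ n ∧ f (2 * m) ≤ A * f m := by
  by_contra! hcon
  obtain ⟨K, hKn, hK⟩ := exists_two_pow_mul_ceil_rpow_le hη0.le hη1.le hn
  set m₀ := ⌈(n : ℝ) ^ (1 - η)⌉₊
  have hA0 : 0 ≤ A := le_trans (by positivity) hA
  have hdoubling : ∀ m, m₀ ≤ m → 2 * m ≤ n → A * f m ≤ f (2 * m) := fun m hm h2m =>
    (hcon m ((Nat.le_ceil _).trans (by exact_mod_cast hm)) (by omega)).le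
  have hn1 : (1 : ℝ) ≤ n := by exact_mod_cast hn
  have := calc
    b * (n : ℝ) ^ d < ((n : ℝ) ^ η / 4) ^ t := mul_rpow_lt_rpow_div_four_pow hn1 hbn ht
    _ ≤ ((2 : ℝ) ^ K) ^ t := by gcongr; linarith
    _ = ((2 : ℝ) ^ t) ^ K := by rw [← pow_mul, ← pow_mul, mul_comm]
    _ ≤ A ^ K := by gcongr
    _ ≤ A ^ K * f m₀ := le_mul_of_one_le_right (by positivity) (hf1 m₀)
    _ ≤ f (2 ^ K * m₀) := pow_mul_le_of_forall_mul_le_two_mul hA0 hdoubling K hKn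
    _ ≤ f n := hmono hKn
    _ ≤ b * (n : ℝ) ^ d := hgrowth n hn
  exact lt_irrefl _ this

theorem exists_doubling_scale (hb : 0 ≤ b) (hd : 0 ≤ d) (hη0 : 0 < η) (hη1 : η < 1) :
    ∃ A > (0 : ℝ), ∀ f : ℕ → ℝ, Monotone f → (∀ m, 1 ≤ f m) →
      (∀ n : ℕ, 1 ≤ n → f n ≤ b * (n : ℝ) ^ d) →
      ∀ n : ℕ, 0 < n → ∃ m : ℕ, (n : ℝ) ^ (1 - η) ≤ m ∧ m ≤ n ∧ f (2 * m) ≤ A * f m := by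
  set t := ⌈(d + 1) / η⌉₊
  have ht : d + 1 ≤ η * t := by
    rw [← div_le_iff₀' hη0]; exact Nat.le_ceil _
  set N := ⌈b * 4 ^ t⌉₊
  set A := 2 ^ t + b * ((2 * N : ℕ) : ℝ) ^ d
  have hbN : 0 ≤ b * ((2 * N : ℕ) : ℝ) ^ d := by positivity
  refine ⟨A, add_pos_of_pos_of_nonneg (by positivity) hbN, fun f hmono hf1 hgrowth n hn => ?_⟩
  rcases le_or_gt n N with hnN | hNn
  · refine ⟨n, rpow_le_self_of_one_le (by exact_mod_cast hn) (by linarith), le_rfl, ?_⟩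
    calc f (2 * n) ≤ b * ((2 * n : ℕ) : ℝ) ^ d := hgrowth _ (by omega)
      _ ≤ b * ((2 * N : ℕ) : ℝ) ^ d := by gcongr
      _ ≤ A := le_add_of_nonneg_left (by positivity)
      _ ≤ A * f n := le_mul_of_one_le_right (by positivity) (hf1 n)
  · exact exists_doubling_scale_of_mul_four_pow_lt hmono hf1 hgrowth hη0 hη1 ht (le_add_of_nonneg_right hbN)
      hn ((Nat.le_ceil (b * 4 ^ t : ℝ)).trans_lt (Nat.cast_lt.2 hNn))

end DoublingScale

namespace SepProfile

variable {V : Type*} {G : SimpleGraph V} {v : V}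

lemma mem_ball_self (k : ℕ) : v ∈ ball G v k :=
  ⟨.refl v, by simp⟩

lemma ball_mono {j k : ℕ} (hjk : j ≤ k) : ball G v j ⊆ ball G v k :=
  fun _ hu => ⟨hu.1, hu.2.trans hjk⟩

end SepProfile

theorem stmt7_general {V : Type*} (G : SimpleGraph V)
    (b d₂ : ℝ) (hb : 0 < b) (hd₂ : 0 < d₂)
    (hball : ∀ (v : V) (n : ℕ), 1 ≤ n → (ball G v n).Finite ∧
      ((ball G v n).ncard : ℝ) ≤ b * (n : ℝ) ^ d₂)
    (η : ℝ) (hη : η ∈ Set.Ioo (0:ℝ) 1) :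
    ∃ A > (0:ℝ), ∀ (v : V) (n : ℕ), 0 < n →
      ∃ m : ℕ, (n : ℝ) ^ (1 - η) ≤ (m : ℝ) ∧ m ≤ n ∧
        ((ball G v (2*m)).ncard : ℝ) ≤ A * ((ball G v m).ncard : ℝ) := by
  have hfin : ∀ v k, (ball G v k).Finite := fun v k =>
    (hball v (k + 1) (by omega)).1.subset (ball_mono (by omega))
  obtain ⟨A, hA, hscale⟩ := exists_doubling_scale hb.le hd₂.le hη.1 hη.2
  refine ⟨A, hA, fun v =>
    hscale (fun k => ((ball G v k).ncard : ℝ)) ?_ ?_ (fun n hn => (hball v n hn).2)⟩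
  · exact fun j k hjk => Nat.cast_le.2 (Set.ncard_le_ncard (ball_mono hjk) (hfin v k))
  · exact fun k => Nat.one_le_cast.2 ((Set.ncard_pos (hfin v k)).2 ⟨v, mem_ball_self k⟩)

theorem stmt7 {V : Type*} (G : SimpleGraph V) (D : ℕ) (hdeg : DegLE G D)
    (b d₂ : ℝ) (hb : 0 < b) (hd₂ : 0 < d₂)
    (hball : ∀ (v : V) (n : ℕ), 1 ≤ n → (ball G v n).Finite ∧
      ((ball G v n).ncard : ℝ) ≤ b * (n : ℝ) ^ d₂)
    (η : ℝ) (hη : η ∈ Set.Ioo (0:ℝ) 1) :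
    ∃ A > (0:ℝ), ∀ (v : V) (n : ℕ), 0 < n →
      ∃ m : ℕ, (n : ℝ) ^ (1 - η) ≤ (m : ℝ) ∧ m ≤ n ∧
        ((ball G v (2*m)).ncard : ℝ) ≤ A * ((ball G v m).ncard : ℝ) :=
  stmt7_general G b d₂ hb hd₂ hball η hη
end

section
/- Let G be a graph with vertex degrees bounded by d such that sup_x |B_n(x)| ≤ K₁·e^{K₂ n^α} for constants K₁, K₂ > 0 and α ∈ (0,1). Then there are constants L₁, L₂ > 0 such that for all N > L₁: Sep(N)/N ≤ L₂/(log N)^{1/α − 1}. -/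
open Set Filter

open SepProfile Real

/-!
Fix a finite set `F`, a vertex `v ∈ F` and a radius `n`, and grow balls `B_0 ⊆ B_1 ⊆ ⋯` around
`v` inside `F`. Every boundary edge of `B_r` in `F` ends in the shell `B_{r+1} \ B_r`, so if all
of them had `|∂_F B_r| > d (q - 1) |B_r|` we would get `|B_{r+1}| > q |B_r|` and `|B_n| > q ^ n`.
Hence, once balls of radius `n` have at most `q ^ n` points and `|F| ≥ 2 q ^ n`, some `B_r` has
Cheeger ratio at most `d (q - 1)`, which gives `Sep(N)/N ≤ d (2 q ^ n / N + q - 1)`. With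
`q ^ n = exp (C n ^ α)` and `n ≈ (log N / 2C) ^ (1/α)` the first term is about `N ^ (-1/2)` and
`q - 1 ≈ C n ^ (α - 1) ≈ (log N) ^ (1 - 1/α)`.
-/

namespace SepProfile

variable {V : Type*} (G : SimpleGraph V)

/-- Breadth-first growth of `{v}` inside `F`: the ball of radius `r` around `v` in the subgraph
induced on `F`, when `v ∈ F`. -/
def inducedBall (F : Set V) (v : V) : ℕ → Set V
  | 0 => {v}
  | r + 1 => inducedBall F v r ∪ {b ∈ F | ∃ a ∈ inducedBall F v r, G.Adj a b}

variable {G}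

lemma inducedBall_subset_succ (F : Set V) (v : V) (r : ℕ) :
    inducedBall G F v r ⊆ inducedBall G F v (r + 1) :=
  Set.subset_union_left

lemma mem_inducedBall (F : Set V) (v : V) (r : ℕ) : v ∈ inducedBall G F v r := by
  induction r with
  | zero => rfl
  | succ r ih => exact inducedBall_subset_succ F v r ih

lemma inducedBall_subset {F : Set V} {v : V} (hv : v ∈ F) (r : ℕ) : inducedBall G F v r ⊆ F := by
  induction r with
  | zero => simpa [inducedBall]
  | succ r ih => exact Set.union_subset ih fun _ hb => hb.1

lemma ball_mono_s15 (v : V) {m n : ℕ} (h : m ≤ n) : ball G v m ⊆ ball G v n :=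
  fun _ hu => ⟨hu.1, hu.2.trans h⟩

lemma inducedBall_subset_ball (F : Set V) (v : V) (r : ℕ) : inducedBall G F v r ⊆ ball G v r := by
  induction r with
  | zero =>
    rintro u rfl
    exact ⟨.refl u, by simp⟩
  | succ r ih =>
    rintro b (hb | ⟨-, a, ha, hab⟩)
    · exact ball_mono_s15 v r.le_succ (ih hb)
    · obtain ⟨hva, hdist⟩ := ih ha
      obtain ⟨p, hp⟩ := hva.exists_walk_length_eq_dist
      refine ⟨hva.trans hab.reachable, ?_⟩
      calc G.dist v b ≤ (p.concat hab).length := SimpleGraph.dist_le _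
        _ = p.length + 1 := p.length_concat hab
        _ ≤ r + 1 := by omega

lemma neighborSet_subset_ball (v : V) : G.neighborSet v ⊆ ball G v 1 :=
  fun _ hu => ⟨hu.reachable, SimpleGraph.dist_le hu.toWalk⟩

variable {D : ℕ}

lemma ncard_le_mul_of_forall_adj (hdeg : DegLE G D) (hloc : ∀ v, (G.neighborSet v).Finite)
    {A : Set V} (hA : A.Finite) {S : Set (V × V)}
    (hS : ∀ p ∈ S, p.1 ∈ A ∧ G.Adj p.1 p.2) : S.ncard ≤ D * A.ncard := by
  have hsub : S ⊆ ⋃ a ∈ hA.toFinset, {a} ×ˢ G.neighborSet a := fun p hp =>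
    Set.mem_iUnion₂.2 ⟨p.1, hA.mem_toFinset.2 (hS p hp).1, Set.mem_singleton _, (hS p hp).2⟩
  have hfin : (⋃ a ∈ hA.toFinset, {a} ×ˢ G.neighborSet a).Finite :=
    hA.toFinset.finite_toSet.biUnion fun a _ => (Set.finite_singleton a).prod (hloc a)
  calc S.ncard ≤ (⋃ a ∈ hA.toFinset, {a} ×ˢ G.neighborSet a).ncard :=
        Set.ncard_le_ncard hsub hfin
    _ ≤ ∑ a ∈ hA.toFinset, ({a} ×ˢ G.neighborSet a).ncard := Finset.set_ncard_biUnion_le _ _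
    _ ≤ ∑ _a ∈ hA.toFinset, D := Finset.sum_le_sum fun a _ => by
        rw [Set.ncard_prod, Set.ncard_singleton, one_mul]
        exact hdeg a
    _ = D * A.ncard := by simp [Set.ncard_eq_toFinset_card _ hA, mul_comm]

lemma ncard_inbd_le (hdeg : DegLE G D) (hloc : ∀ v, (G.neighborSet v).Finite) (F : Set V)
    {A : Set V} (hA : A.Finite) :
    (inbd G F A).ncard ≤ D * A.ncard :=
  ncard_le_mul_of_forall_adj hdeg hloc hA fun _ hp => ⟨hp.2.1, hp.1⟩

lemma ncard_inbd_inducedBall_le (hdeg : DegLE G D) (hloc : ∀ v, (G.neighborSet v).Finite)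
    (F : Set V) (v : V) (r : ℕ) (hfin : (inducedBall G F v (r + 1)).Finite) :
    (inbd G F (inducedBall G F v r)).ncard ≤
      D * (inducedBall G F v (r + 1) \ inducedBall G F v r).ncard := by
  rw [← Set.ncard_image_of_injective _ Prod.swap_injective]
  refine ncard_le_mul_of_forall_adj hdeg hloc hfin.sdiff ?_
  rintro _ ⟨⟨a, b⟩, ⟨hab, ha, hbF, hb⟩, rfl⟩
  exact ⟨⟨Or.inr ⟨hbF, a, ha, hab⟩, hb⟩, hab.symm⟩

lemma exists_ncard_inbd_inducedBall_le (hdeg : DegLE G D)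
    (hloc : ∀ v, (G.neighborSet v).Finite) (F : Set V) (v : V) {n : ℕ} (hn : 1 ≤ n) {q : ℝ}
    (hq : 0 ≤ q) (hfin : (ball G v n).Finite) (hball : ((ball G v n).ncard : ℝ) ≤ q ^ n) :
    ∃ r < n, ((inbd G F (inducedBall G F v r)).ncard : ℝ) ≤
      D * (q - 1) * (inducedBall G F v r).ncard := by
  by_contra! hcon
  obtain ⟨b, hb⟩ : ∃ b : ℕ → ℝ, ∀ r, b r = (inducedBall G F v r).ncard := ⟨_, fun _ => rfl⟩
  have hfinr : ∀ r ≤ n, (inducedBall G F v r).Finite := fun r hr =>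
    hfin.subset ((inducedBall_subset_ball F v r).trans (ball_mono_s15 v hr))
  have hstep : ∀ r < n, q * b r < b (r + 1) := by
    intro r hr
    have hshell : ((inbd G F (inducedBall G F v r)).ncard : ℝ) ≤ D * (b (r + 1) - b r) := by
      have h := ncard_inbd_inducedBall_le hdeg hloc F v r (hfinr _ hr)
      have hsplit :=
        Set.ncard_sdiff_add_ncard_of_subset (inducedBall_subset_succ F v r) (hfinr _ hr)
      rw [hb, hb, ← hsplit]
      have h' := (Nat.cast_le (α := ℝ)).2 h
      push_cast at h' ⊢
      linarith
    have hsmall := hcon r hr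
    rw [← hb r] at hsmall
    have h : (D : ℝ) * (q * b r) < D * b (r + 1) := by linarith
    exact lt_of_mul_lt_mul_left h (Nat.cast_nonneg D)
  have hpow : ∀ r ≤ n, q ^ r ≤ b r := by
    intro r
    induction r with
    | zero => simp [hb, inducedBall]
    | succ r ih =>
      intro hr
      calc q ^ (r + 1) = q * q ^ r := pow_succ' q r
        _ ≤ q * b r := mul_le_mul_of_nonneg_left (ih (by omega)) hq
        _ ≤ b (r + 1) := (hstep r hr).le
  obtain ⟨m, rfl⟩ : ∃ m, n = m + 1 := ⟨n - 1, by omega⟩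
  have hbn : b (m + 1) ≤ q ^ (m + 1) := hball.trans' <| by
    rw [hb]
    exact_mod_cast Set.ncard_le_ncard (inducedBall_subset_ball F v (m + 1)) hfin
  have := calc q ^ (m + 1) = q * q ^ m := pow_succ' q m
    _ ≤ q * b m := mul_le_mul_of_nonneg_left (hpow m (by omega)) hq
    _ < b (m + 1) := hstep m (by omega)
  linarith

lemma cheeger_nonneg (F : Set V) : 0 ≤ cheeger G F :=
  Real.sInf_nonneg <| by
    rintro _ ⟨A, -, -, -, rfl⟩
    positivity

lemma cheeger_le_div {F A : Set V} (hAF : A ⊆ F) (hA : A.Nonempty)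
    (hcard : 2 * A.ncard ≤ F.ncard) :
    cheeger G F ≤ ((inbd G F A).ncard : ℝ) / A.ncard := by
  refine csInf_le ⟨0, ?_⟩ ⟨A, hAF, hA, hcard, rfl⟩
  rintro _ ⟨B, -, -, -, rfl⟩
  positivity

lemma cheeger_le (hdeg : DegLE G D) (hloc : ∀ v, (G.neighborSet v).Finite) {F : Set V}
    (hF : F.Finite) : cheeger G F ≤ D := by
  by_cases h : ∃ A ⊆ F, A.Nonempty ∧ 2 * A.ncard ≤ F.ncard
  · obtain ⟨A, hAF, hA, hcard⟩ := h
    have hA0 : (0 : ℝ) < A.ncard := by exact_mod_cast (Set.ncard_pos (hF.subset hAF)).2 hA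
    refine (cheeger_le_div hAF hA hcard).trans ?_
    rw [div_le_iff₀ hA0]
    exact_mod_cast ncard_inbd_le hdeg hloc F (hF.subset hAF)
  · push Not at h
    have hempty : cheeger G F = 0 := by
      rw [cheeger]
      convert Real.sInf_empty using 2
      refine Set.eq_empty_of_forall_notMem ?_
      rintro _ ⟨A, hAF, hA, hcard, -⟩
      exact (h A hAF hA).not_ge hcard
    rw [hempty]
    positivity

lemma cheeger_le_of_ncard_ball_le (hdeg : DegLE G D) (hloc : ∀ v, (G.neighborSet v).Finite)
    {F : Set V} {v : V} (hv : v ∈ F) {n : ℕ} (hn : 1 ≤ n) {q : ℝ} (hq : 0 ≤ q)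
    (hfin : (ball G v n).Finite) (hball : ((ball G v n).ncard : ℝ) ≤ q ^ n)
    (hF : 2 * q ^ n ≤ F.ncard) : cheeger G F ≤ D * (q - 1) := by
  obtain ⟨r, hrn, hr⟩ := exists_ncard_inbd_inducedBall_le hdeg hloc F v hn hq hfin hball
  set A := inducedBall G F v r
  have hAball : A ⊆ ball G v n := (inducedBall_subset_ball F v r).trans (ball_mono_s15 v hrn.le)
  have hA0 : (0 : ℝ) < A.ncard := by
    exact_mod_cast (Set.ncard_pos (hfin.subset hAball)).2 ⟨v, mem_inducedBall F v r⟩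
  have hAn : (A.ncard : ℝ) ≤ q ^ n :=
    hball.trans' (by exact_mod_cast Set.ncard_le_ncard hAball hfin)
  have hcard : 2 * A.ncard ≤ F.ncard := by
    exact_mod_cast (by linarith : (2 * A.ncard : ℝ) ≤ F.ncard)
  refine (cheeger_le_div (inducedBall_subset hv r) ⟨v, mem_inducedBall F v r⟩ hcard).trans ?_
  rwa [div_le_iff₀ hA0]

lemma sep_div_le (hdeg : DegLE G D) {n : ℕ} (hn : 1 ≤ n) {q : ℝ} (hq : 1 ≤ q)
    (hball : ∀ v, (ball G v n).Finite ∧ ((ball G v n).ncard : ℝ) ≤ q ^ n) (N : ℕ) :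
    sep G N / N ≤ D * (2 * q ^ n / N + (q - 1)) := by
  have hloc : ∀ v, (G.neighborSet v).Finite := fun v =>
    (hball v).1.subset ((neighborSet_subset_ball v).trans (ball_mono_s15 v hn))
  have hq1 : 0 ≤ q - 1 := by linarith
  rcases N.eq_zero_or_pos with rfl | hN
  · simpa using mul_nonneg (Nat.cast_nonneg D) hq1
  have hN0 : (0 : ℝ) < N := by exact_mod_cast hN
  have hsplit : D * (2 * q ^ n / N + (q - 1)) * N = 2 * q ^ n * D + N * (D * (q - 1)) := by
    field_simp
  have hsmall_nonneg : 0 ≤ 2 * q ^ n * D := by positivity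
  have hlarge_nonneg : 0 ≤ N * (D * (q - 1)) := by positivity
  rw [div_le_iff₀ hN0, hsplit]
  refine Real.sSup_le ?_ (by positivity)
  rintro _ ⟨F, hF, hFN, rfl⟩
  by_cases hsmall : (F.ncard : ℝ) < 2 * q ^ n
  · have := mul_le_mul hsmall.le (cheeger_le hdeg hloc hF) (cheeger_nonneg F) (by positivity)
    linarith
  · push Not at hsmall
    obtain ⟨v, hv⟩ : F.Nonempty := Set.nonempty_of_ncard_ne_zero <| by
      have : (0 : ℝ) < F.ncard := hsmall.trans_lt' (by positivity)
      exact_mod_cast this.ne'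
    have := mul_le_mul (by exact_mod_cast hFN : (F.ncard : ℝ) ≤ N)
      (cheeger_le_of_ncard_ball_le hdeg hloc hv hn (by linarith) (hball v).1 (hball v).2 hsmall)
      (cheeger_nonneg F) hN0.le
    linarith

end SepProfile

lemma mul_exp_mul_le_exp {K₁ K₂ x : ℝ} (hK₁ : 0 < K₁) (hx : 1 ≤ x) :
    K₁ * exp (K₂ * x) ≤ exp ((K₂ + |log K₁|) * x) := by
  have hlog : log K₁ ≤ |log K₁| * x :=
    (le_abs_self _).trans (le_mul_of_one_le_right (abs_nonneg _) hx)
  calc K₁ * exp (K₂ * x) = exp (log K₁ + K₂ * x) := by rw [exp_add, exp_log hK₁]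
    _ ≤ exp ((K₂ + |log K₁|) * x) := exp_le_exp.2 (by linarith)

lemma exists_nat_radius {C α L : ℝ} (hC : 0 < C) (hα0 : 0 < α) (hL : 2 * C ≤ L) :
    ∃ n : ℕ, 1 ≤ n ∧ C * n ^ α ≤ L / 2 ∧ C * n ^ α / n ≤ (2 * C) ^ α⁻¹ / L ^ (α⁻¹ - 1) := by
  have hL0 : 0 < L := by linarith
  set t := (L / (2 * C)) ^ α⁻¹ with ht
  have ht1 : 1 ≤ t := one_le_rpow ((one_le_div (by positivity)).2 hL) (inv_nonneg.2 hα0.le)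
  have htα : C * t ^ α = L / 2 := by
    rw [ht, rpow_inv_rpow (by positivity) hα0.ne']
    field_simp
  have hnt : (⌊t⌋₊ : ℝ) ≤ t := Nat.floor_le (by linarith)
  have htn : t / 2 ≤ ⌊t⌋₊ := by
    have h1 : (1 : ℝ) ≤ ⌊t⌋₊ := by exact_mod_cast Nat.le_floor (by exact_mod_cast ht1)
    linarith [Nat.lt_floor_add_one t]
  have hpow : C * (⌊t⌋₊ : ℝ) ^ α ≤ L / 2 :=
    htα ▸ mul_le_mul_of_nonneg_left (rpow_le_rpow (by positivity) hnt hα0.le) hC.le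
  refine ⟨⌊t⌋₊, Nat.le_floor (by exact_mod_cast ht1), hpow, ?_⟩
  calc C * (⌊t⌋₊ : ℝ) ^ α / ⌊t⌋₊ ≤ (L / 2) / (t / 2) :=
        div_le_div₀ (by positivity) hpow (by positivity) htn
    _ = L / t := by field_simp
    _ = (2 * C) ^ α⁻¹ / L ^ (α⁻¹ - 1) := by
      rw [ht, div_rpow hL0.le (by positivity), rpow_sub_one hL0.ne']
      field_simp

lemma eventually_exists_radius_error_le {C α : ℝ} (hC : 0 < C) (hα : α ∈ Ioo 0 1) :
    ∃ L₂ > 0, ∀ᶠ x : ℝ in atTop, ∃ n : ℕ, 1 ≤ n ∧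
      2 * exp (C * n ^ α) / x + (exp (C * n ^ α / n) - 1) ≤ L₂ / log x ^ (1 / α - 1) := by
  set K := (2 * C) ^ α⁻¹
  have hc : 0 < α⁻¹ - 1 := sub_pos.2 (one_lt_inv₀ hα.1 |>.2 hα.2)
  refine ⟨1 + 2 * K, by positivity, ?_⟩
  have hlarge : ∀ᶠ L : ℝ in atTop,
      2 * C ≤ L ∧ K ≤ L ^ (α⁻¹ - 1) ∧ L ^ (α⁻¹ - 1) * exp (-(1 / 2) * L) ≤ 1 / 2 :=
    (eventually_ge_atTop _).and <| ((tendsto_rpow_atTop hc).eventually_ge_atTop _).and <|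
      (tendsto_rpow_mul_exp_neg_mul_atTop_nhds_zero _ _ (by norm_num)).eventually
        (ge_mem_nhds (by norm_num))
  filter_upwards [tendsto_log_atTop.eventually hlarge, eventually_gt_atTop 0]
    with x ⟨hL, hK, hdecay⟩ hx
  obtain ⟨n, hn, hpow, hratio⟩ := exists_nat_radius hC hα.1 hL
  have hLc : 0 < log x ^ (α⁻¹ - 1) := rpow_pos_of_pos (by linarith) _
  have hfirst : 2 * exp (C * n ^ α) / x ≤ 1 / log x ^ (α⁻¹ - 1) := by
    calc 2 * exp (C * n ^ α) / x ≤ 2 * exp (log x / 2) / exp (log x) := by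
          rw [exp_log hx]
          have : exp (C * n ^ α) ≤ exp (log x / 2) := exp_le_exp.2 hpow
          exact div_le_div_of_nonneg_right (by linarith) hx.le
      _ = 2 * exp (-(1 / 2) * log x) := by
          rw [div_eq_iff (exp_pos _).ne', mul_assoc, ← exp_add]
          ring_nf
      _ ≤ 1 / log x ^ (α⁻¹ - 1) := by
          rw [le_div_iff₀ hLc]
          linarith
  have hsecond : exp (C * n ^ α / n) - 1 ≤ 2 * K / log x ^ (α⁻¹ - 1) := by
    have hy0 : 0 ≤ C * n ^ α / n := by positivity
    have hy1 : C * n ^ α / n ≤ 1 := hratio.trans ((div_le_one hLc).2 hK)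
    calc exp (C * n ^ α / n) - 1 ≤ 2 * |C * n ^ α / n| :=
          (le_abs_self _).trans (abs_exp_sub_one_le (by rwa [abs_of_nonneg hy0]))
      _ ≤ 2 * K / log x ^ (α⁻¹ - 1) := by
          rw [abs_of_nonneg hy0, mul_div_assoc 2 K]
          exact mul_le_mul_of_nonneg_left hratio zero_le_two
  refine ⟨n, hn, ?_⟩
  rw [one_div α, add_div]
  linarith

theorem stmt15 {V : Type*} (G : SimpleGraph V) (d : ℕ) (hdeg : DegLE G d)
    (K₁ K₂ α : ℝ) (hK₁ : 0 < K₁) (hK₂ : 0 < K₂) (hα : α ∈ Set.Ioo (0:ℝ) 1)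
    (hball : ∀ (x : V) (n : ℕ), 1 ≤ n → (ball G x n).Finite ∧
      ((ball G x n).ncard : ℝ) ≤ K₁ * Real.exp (K₂ * (n : ℝ) ^ α)) :
    ∃ L₁ > (0:ℝ), ∃ L₂ > (0:ℝ), ∀ N : ℕ, L₁ < (N : ℝ) →
      sep G N / (N : ℝ) ≤ L₂ / (Real.log N) ^ (1/α - 1) := by
  set C := K₂ + |log K₁|
  have hballC : ∀ (x : V) (n : ℕ), 1 ≤ n →
      (ball G x n).Finite ∧ ((ball G x n).ncard : ℝ) ≤ exp (C * (n : ℝ) ^ α) := fun x n hn =>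
    ⟨(hball x n hn).1, (hball x n hn).2.trans <|
      mul_exp_mul_le_exp hK₁ (one_le_rpow (by exact_mod_cast hn) hα.1.le)⟩
  obtain ⟨L₂, hL₂, hradius⟩ := eventually_exists_radius_error_le (by positivity : 0 < C) hα
  obtain ⟨L₁, hL₁⟩ := eventually_atTop.1 hradius
  refine ⟨max L₁ 1, by positivity, (d + 1) * L₂, by positivity, fun N hN => ?_⟩
  obtain ⟨hN₁, hN1⟩ := max_lt_iff.1 hN
  obtain ⟨n, hn, hbound⟩ := hL₁ N hN₁.le
  have hq : exp (C * (n : ℝ) ^ α / n) ^ n = exp (C * (n : ℝ) ^ α) := by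
    rw [← exp_nat_mul, mul_div_cancel₀ _ (by positivity)]
  have hsep := sep_div_le hdeg hn (one_le_exp (by positivity)) (fun v => hq ▸ hballC v n hn) N
  rw [hq] at hsep
  have hlog : 0 < log N := log_pos hN1
  calc sep G N / N ≤ d * (L₂ / log N ^ (1 / α - 1)) :=
        hsep.trans (mul_le_mul_of_nonneg_left hbound (Nat.cast_nonneg d))
    _ ≤ (d + 1) * L₂ / log N ^ (1 / α - 1) := by
        rw [mul_div_assoc]
        gcongr
        linarith
end
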